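/- Assume e ≥ 2. For each k = 1, …, e−1, the diagonal entries of U^{(k)} are equal, with U^{(k)}₁₁ = U^{(k)}₂₂ = ∏_{l=0}^{k−1} d_•^{(l)}(1) / (∏_{l=0}^{k−1} m₁^{(l)}(2) · ∏_{l=0}^{k−1} m₂^{(l)}(1)); moreover the entry M^{(k)}₂₂ = 1/U^{(k)}₂₂ of M^{(k)} = sw(U^{(k)}) is a positive integer. -/

import Mathlib

/-- The data of a reduced irreducible quasi-ordinary prototype surface branch
`ζ = Σ_{j=1}^e x₁^{λ_{1,j}} x₂^{λ_{2,j}}` together with, for each choice `i ∈ {1,2}`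
of the recursion, the derived exponent sequences `λ^{(k)}_{u,j}(i)`, the lowest-terms
representations `λ^{(k)}_{u,1}(i) = n_u^{(k)}(i) / m_u^{(k)}(i)` of the leading
exponents, and the minimal nonnegative integers `r_i^{(k)}, s_i^{(k)}` with
`m_ĩ^{(k)}(i)·s_i^{(k)} − n_ĩ^{(k)}(i)·r_i^{(k)} = 1`.

The `Bool` index `false` corresponds to the index `1` of the paper and `true` to `2`;
for an index `i`, the other index `ĩ` is `!i`. -/
structure QOData where
  /-- the number `e ≥ 1` of characteristic terms -/
  e : ℕ
  he : 1 ≤ e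
  /-- the characteristic exponents `λ_{u,j}` for `u ∈ {1,2}`, `j = 1,…,e` -/
  lam0 : Bool → ℕ → ℚ
  /-- the derived exponents `λ^{(k)}_{u,j}(i)`; the arguments are, in order, `i u k j`,
  with `k = 0,…,e−1` and `j = 1,…,e−k` -/
  lam : Bool → Bool → ℕ → ℕ → ℚ
  /-- the numerators `n_u^{(k)}(i)`; the arguments are, in order, `i u k` -/
  n : Bool → Bool → ℕ → ℤ
  /-- the denominators `m_u^{(k)}(i) ≥ 1`; the arguments are, in order, `i u k` -/
  m : Bool → Bool → ℕ → ℕ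
  /-- `r_i^{(k)}`; the arguments are, in order, `i k` -/
  r : Bool → ℕ → ℕ
  /-- `s_i^{(k)}`; the arguments are, in order, `i k` -/
  s : Bool → ℕ → ℕ
  /-- the leading exponents are positive -/
  pos : ∀ u, 0 < lam0 u 1
  /-- the exponents are nondecreasing in `j` -/
  mono : ∀ u j, 1 ≤ j → j < e → lam0 u j ≤ lam0 u (j + 1)
  /-- each characteristic pair is essential: it does not lie in the subgroup of `ℚ²`
  generated by `ℤ²` together with the earlier pairs -/
  essential : ∀ j, 1 ≤ j → j ≤ e →
    (lam0 false j, lam0 true j) ∉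
      AddSubgroup.closure
        ((Set.range fun p : ℤ × ℤ => ((p.1 : ℚ), (p.2 : ℚ))) ∪
          {q : ℚ × ℚ | ∃ l, 1 ≤ l ∧ l < j ∧ q = (lam0 false l, lam0 true l)})
  /-- `λ^{(0)}_{u,j}(i) = λ_{u,j}` -/
  base : ∀ i u j, lam i u 0 j = lam0 u j
  /-- the denominators are at least 1 -/
  m_pos : ∀ i u k, k ≤ e - 1 → 1 ≤ m i u k
  /-- the leading exponents are written in lowest terms -/
  cop : ∀ i u k, k ≤ e - 1 → Int.gcd (n i u k) (m i u k : ℤ) = 1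
  /-- `λ^{(k)}_{u,1}(i) = n_u^{(k)}(i) / m_u^{(k)}(i)` -/
  lead : ∀ i u k, k ≤ e - 1 → lam i u k 1 = (n i u k : ℚ) / (m i u k : ℚ)
  /-- `m_ĩ^{(k)}(i)·s_i^{(k)} − n_ĩ^{(k)}(i)·r_i^{(k)} = 1` -/
  rs_det : ∀ i k, k ≤ e - 1 →
    (m i (!i) k : ℤ) * (s i k : ℤ) - n i (!i) k * (r i k : ℤ) = 1
  /-- `r_i^{(k)}` and `s_i^{(k)}` are the smallest nonnegative integers satisfying
  the determinant condition -/
  rs_min : ∀ i k, k ≤ e - 1 → ∀ r' s' : ℕ,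
    (m i (!i) k : ℤ) * (s' : ℤ) - n i (!i) k * (r' : ℤ) = 1 → r i k ≤ r' ∧ s i k ≤ s'
  /-- the recursion for `λ^{(k+1)}_{ĩ,j}(i)`, where `d_•^{(k)}(i) = lcm(m₁^{(k)}(i), m₂^{(k)}(i))` -/
  rec_other : ∀ i k j, k + 1 ≤ e - 1 → 1 ≤ j → j ≤ e - (k + 1) →
    lam i (!i) (k + 1) j =
      (m i (!i) k : ℚ) *
        (lam i (!i) k (j + 1) - lam i (!i) k 1 +
          (Nat.lcm (m i false k) (m i true k) : ℚ) * lam i (!i) k 1)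
  /-- the recursion for `λ^{(k+1)}_{i,j}(i)`, where
  `b_i^{(k)} = d_•^{(k)}(i) / m_ĩ^{(k)}(i)` -/
  rec_self : ∀ i k j, k + 1 ≤ e - 1 → 1 ≤ j → j ≤ e - (k + 1) →
    lam i i (k + 1) j =
      ((Nat.lcm (m i false k) (m i true k) / m i (!i) k : ℕ) : ℚ) *
        (lam i i k (j + 1) - lam i i k 1 +
          (Nat.lcm (m i false k) (m i true k) : ℚ) * lam i i k 1) +
      ((Nat.lcm (m i false k) (m i true k) / m i (!i) k : ℕ) : ℚ) * (r i k : ℚ) *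
        lam i i k 1 * lam i (!i) (k + 1) j

namespace QOData

variable (D : QOData)

/-- `d_•^{(k)}(i) = lcm(m₁^{(k)}(i), m₂^{(k)}(i))` -/
def dd (i : Bool) (k : ℕ) : ℕ := Nat.lcm (D.m i false k) (D.m i true k)

/-- `b_i^{(k)} = d_•^{(k)}(i) / m_ĩ^{(k)}(i)` -/
def b (i : Bool) (k : ℕ) : ℕ := D.dd i k / D.m i (!i) k

/-- `c_•^{(k)}(i) = gcd(n₁^{(k)}(i), n₂^{(k)}(i))` -/
def c (i : Bool) (k : ℕ) : ℕ := Int.gcd (D.n i false k) (D.n i true k)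

/-- `d^{(k)}(i) = ∏_{l=k}^{e−1} d_•^{(l)}(i)`, the degree of the `k`-th derived surface -/
def dTot (i : Bool) (k : ℕ) : ℕ := ∏ l ∈ Finset.Ico k D.e, D.dd i l

end QOData
/-- For a 2×2 matrix `U` over a field with `U 1 1 ≠ 0` and determinant `Δ`,
`sw U = [[Δ/U₂₂, U₁₂/U₂₂], [−U₂₁/U₂₂, 1/U₂₂]]`. -/
def sw (U : Matrix (Fin 2) (Fin 2) ℚ) : Matrix (Fin 2) (Fin 2) ℚ :=
  !![U.det / U 1 1, U 0 1 / U 1 1; -(U 1 0) / U 1 1, 1 / U 1 1]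

namespace QOData

/-- The auxiliary matrices `U^{(k)}` of the paper:
`U^{(1)} = [[b₁/m₁, b₁·r₁·λ_{1,1}], [b₂·r₂·λ_{2,1}, b₂/m₂]]` and, for `k ≥ 1`,
`U^{(k+1)}₁₁ = (b₁^{(k)}/m₁^{(k)}(2))·U^{(k)}₁₁`,
`U^{(k+1)}₁₂ = (b₁^{(k)}/m₂^{(k)}(1))·U^{(k)}₁₂ + b₁^{(k)}·r₁^{(k)}·λ^{(k)}_{1,1}(1)`,
`U^{(k+1)}₂₁ = (b₂^{(k)}/m₁^{(k)}(2))·U^{(k)}₂₁ + b₂^{(k)}·r₂^{(k)}·λ^{(k)}_{2,1}(2)`,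
`U^{(k+1)}₂₂ = (b₂^{(k)}/m₂^{(k)}(1))·U^{(k)}₂₂`. -/
def Umat (D : QOData) : ℕ → Matrix (Fin 2) (Fin 2) ℚ
  | 0 => 1
  | 1 =>
    !![(D.b false 0 : ℚ) / (D.m false false 0 : ℚ),
        (D.b false 0 : ℚ) * (D.r false 0 : ℚ) * D.lam0 false 1;
      (D.b true 0 : ℚ) * (D.r true 0 : ℚ) * D.lam0 true 1,
        (D.b true 0 : ℚ) / (D.m true true 0 : ℚ)]
  | (k + 2) =>
    !![((D.b false (k + 1) : ℚ) / (D.m true false (k + 1) : ℚ)) * D.Umat (k + 1) 0 0,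
        ((D.b false (k + 1) : ℚ) / (D.m false true (k + 1) : ℚ)) * D.Umat (k + 1) 0 1 +
          (D.b false (k + 1) : ℚ) * (D.r false (k + 1) : ℚ) * D.lam false false (k + 1) 1;
      ((D.b true (k + 1) : ℚ) / (D.m true false (k + 1) : ℚ)) * D.Umat (k + 1) 1 0 +
          (D.b true (k + 1) : ℚ) * (D.r true (k + 1) : ℚ) * D.lam true true (k + 1) 1,
        ((D.b true (k + 1) : ℚ) / (D.m false true (k + 1) : ℚ)) * D.Umat (k + 1) 1 1]

end QOData


/-!
For each recursion `i`, the integer matrices `stepMatrix i k` transport the derived exponents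
modulo `ℤ²`, and their product `stepProd i k` satisfies
`{x | stepProd i k · x ∈ ℤ²} = ℤ² + ℤλ_1 + ⋯ + ℤλ_k`, a lattice that does not depend on `i`.
Two rational matrices with the same integral preimage differ by an element of `GL₂(ℤ)`, so
their determinants agree when both are positive. Since `det (stepProd i k) = ∏ d_•^{(l)}(i)`,
this gives `∏ d_•^{(l)}(1) = ∏ d_•^{(l)}(2)`, which is the equality of the diagonal entries
of `U^{(k)}`. Row `ĩ` of `stepProd i k` is `(∏ m_ĩ^{(l)}(i)) · e_ĩ`, so
`diag(∏ m₁^{(l)}(2), ∏ m₂^{(l)}(1))` maps the same lattice into `ℤ²`; comparing with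
`stepProd 1 k` shows that `1 / U^{(k)}₂₂ = ∏ m₁^{(l)}(2) · ∏ m₂^{(l)}(1) / ∏ d_•^{(l)}(1)`
is an integer.
-/

open Matrix Finset

def intPoints (n : Type*) : AddSubgroup (n → ℚ) :=
  AddSubgroup.pi Set.univ fun _ => (⊥ : Subring ℚ).toAddSubgroup

theorem mem_intPoints {n : Type*} {x : n → ℚ} :
    x ∈ intPoints n ↔ ∀ u, x u ∈ (⊥ : Subring ℚ) := by
  simp [intPoints, AddSubgroup.mem_pi]

theorem AddSubgroup.mem_sup_zmultiples_iff {G : Type*} [AddCommGroup G] {H : AddSubgroup G}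
    {g x : G} : x ∈ H ⊔ AddSubgroup.zmultiples g ↔ ∃ a : ℤ, x - a • g ∈ H := by
  simp only [AddSubgroup.mem_sup, AddSubgroup.mem_zmultiples_iff]
  constructor
  · rintro ⟨y, hy, _, ⟨a, rfl⟩, rfl⟩
    exact ⟨a, by simpa using hy⟩
  · rintro ⟨a, ha⟩
    exact ⟨_, ha, _, ⟨a, rfl⟩, sub_add_cancel x _⟩

theorem single_one_mem_intPoints {n : Type*} [DecidableEq n] (v : n) :
    Pi.single v (1 : ℚ) ∈ intPoints n := by
  refine mem_intPoints.2 fun u => ?_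
  rcases eq_or_ne u v with rfl | huv
  · simp
  · simp [huv]

section IntegerMatrices

variable {n : Type*} [Fintype n] [DecidableEq n]

theorem det_mem_bot {A : Matrix n n ℚ} (hA : ∀ u v, A u v ∈ (⊥ : Subring ℚ)) :
    A.det ∈ (⊥ : Subring ℚ) := by
  choose N hN using fun u v => Subring.mem_bot.mp (hA u v)
  have hA' : A = (Int.castRingHom ℚ).mapMatrix (Matrix.of N) := by
    ext u v
    simp [hN]
  rw [hA', ← RingHom.map_det]
  exact intCast_mem _ _

/-- The columns of `B * A⁻¹` are the images under `B` of the preimages under `A` of the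
standard basis vectors, so they are integral. -/
theorem det_div_det_mem_bot {A B : Matrix n n ℚ} (hA : A.det ≠ 0)
    (h : ∀ x, A *ᵥ x ∈ intPoints n → B *ᵥ x ∈ intPoints n) :
    B.det / A.det ∈ (⊥ : Subring ℚ) := by
  have hcol : ∀ u v, (B * A⁻¹) u v ∈ (⊥ : Subring ℚ) := by
    intro u v
    have hpre : A *ᵥ (A⁻¹ *ᵥ Pi.single v 1) ∈ intPoints n := by
      rw [mulVec_mulVec, mul_nonsing_inv _ hA.isUnit, one_mulVec]
      exact single_one_mem_intPoints v
    have hBx := mem_intPoints.1 (h _ hpre) u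
    rwa [mulVec_mulVec, mulVec_single_one] at hBx
  simpa [det_mul, det_nonsing_inv, div_eq_mul_inv] using det_mem_bot hcol

theorem det_eq_of_forall_mulVec_mem_intPoints_iff {A B : Matrix n n ℚ} (hA : 0 < A.det)
    (hB : 0 < B.det) (h : ∀ x, A *ᵥ x ∈ intPoints n ↔ B *ᵥ x ∈ intPoints n) :
    A.det = B.det := by
  obtain ⟨z, hz⟩ := Subring.mem_bot.1 (det_div_det_mem_bot hA.ne' fun x => (h x).1)
  obtain ⟨w, hw⟩ := Subring.mem_bot.1 (det_div_det_mem_bot hB.ne' fun x => (h x).2)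
  have hzw : z * w = 1 := by
    have : (z : ℚ) * w = 1 := by rw [hz, hw]; field_simp
    exact_mod_cast this
  have hz0 : 0 ≤ z := by
    have : (0 : ℚ) ≤ z := hz ▸ (div_pos hB hA).le
    exact_mod_cast this
  have hz1 : B.det / A.det = 1 := by rw [← hz, Int.eq_one_of_mul_eq_one_right hz0 hzw]; simp
  exact ((div_eq_one_iff_eq hA.ne').1 hz1).symm

end IntegerMatrices

theorem step_image_mem_bot_iff {b q g : ℕ} {ns no r s : ℤ} (hb : b ≠ 0) (hq : q ≠ 0)
    (hg : g ≠ 0) (hbq : b.Coprime q) (hns : IsCoprime ns b) (hrs : (q : ℤ) * g * s - no * r = 1)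
    (ys yo : ℚ) :
    (b * ys + r * ns * q * yo ∈ (⊥ : Subring ℚ) ∧ q * g * yo ∈ (⊥ : Subring ℚ)) ↔
      ∃ a : ℤ, ys - a * (ns / (b * g)) ∈ (⊥ : Subring ℚ) ∧
        yo - a * (no / (q * g)) ∈ (⊥ : Subring ℚ) := by
  have hrsQ : (q : ℚ) * g * s - no * r = 1 := by exact_mod_cast hrs
  constructor
  · rintro ⟨hp, hp'⟩
    obtain ⟨p, hp⟩ := Subring.mem_bot.1 hp
    obtain ⟨p', hp'⟩ := Subring.mem_bot.1 hp'
    obtain ⟨U, V, hUV⟩ : IsCoprime (ns * q) b :=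
      hns.mul_left (Nat.isCoprime_iff_coprime.2 hbq.symm)
    have hUVQ : (U : ℚ) * (ns * q) + V * b = 1 := by exact_mod_cast hUV
    have hyo : yo = p' / (q * g) := by field_simp; linarith
    have hys : ys = (p - r * ns * q * yo) / b := by field_simp; linarith
    refine ⟨q * g * U * p - r * p', Subring.mem_bot.2 ⟨p * V, ?_⟩,
      Subring.mem_bot.2 ⟨p' * s - U * p * no, ?_⟩⟩
    · rw [hys, hyo]
      push_cast
      field_simp
      linear_combination (p * g : ℚ) * hUVQ
    · rw [hyo]
      push_cast
      field_simp
      linear_combination (p' : ℚ) * hrsQ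
  · rintro ⟨a, hs, ho⟩
    obtain ⟨z, hz⟩ := Subring.mem_bot.1 hs
    obtain ⟨z', hz'⟩ := Subring.mem_bot.1 ho
    rw [eq_sub_iff_add_eq] at hz hz'
    subst hz hz'
    refine ⟨Subring.mem_bot.2 ⟨b * z + r * ns * q * z' + a * ns * q * s, ?_⟩,
      Subring.mem_bot.2 ⟨q * g * z' + a * no, ?_⟩⟩
    · push_cast
      field_simp
      linear_combination (a * ns : ℚ) * hrsQ
    · push_cast
      field_simp

theorem Nat.exists_lcm_div_factorization {x y : ℕ} (hx : x ≠ 0) (hy : y ≠ 0) :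
    ∃ g ≠ 0, x = Nat.lcm x y / y * g ∧ y = Nat.lcm x y / x * g ∧
      Nat.lcm x y = Nat.lcm x y / y * (Nat.lcm x y / x) * g ∧
      (Nat.lcm x y / y).Coprime (Nat.lcm x y / x) := by
  obtain ⟨x', y', hc, hx', hy'⟩ := Nat.exists_coprime x y
  set g := Nat.gcd x y
  have hg : g ≠ 0 := Nat.gcd_ne_zero_left hx
  have hl : Nat.lcm x y = x' * y' * g := by
    apply Nat.eq_of_mul_eq_mul_left (Nat.pos_of_ne_zero hg)
    rw [Nat.gcd_mul_lcm]
    nth_rewrite 1 [hx', hy']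
    ring
  have hdx : Nat.lcm x y / y = x' := by
    rw [Nat.div_eq_iff_eq_mul_left (Nat.pos_of_ne_zero hy) (Nat.dvd_lcm_right x y), hl, hy']
    ring
  have hdy : Nat.lcm x y / x = y' := by
    rw [Nat.div_eq_iff_eq_mul_left (Nat.pos_of_ne_zero hx) (Nat.dvd_lcm_left x y), hl, hx']
    ring
  rw [hdx, hdy]
  exact ⟨g, hg, hx', hy', hl, hc⟩

theorem Matrix.det_bool {R : Type*} [CommRing R] (A : Matrix Bool Bool R) :
    A.det = A false false * A true true - A false true * A true false := by
  rw [← det_reindex_self finTwoEquiv.symm, det_fin_two]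
  simp [finTwoEquiv]

namespace QOData

variable (D : QOData)

def charVec (l : ℕ) (u : Bool) : ℚ := D.lam0 u l

def expVec (i : Bool) (k j : ℕ) (u : Bool) : ℚ := D.lam i u k j

def q (i : Bool) (k : ℕ) : ℕ := D.dd i k / D.m i i k

theorem dd_eq_lcm (i : Bool) (k : ℕ) : D.dd i k = Nat.lcm (D.m i i k) (D.m i (!i) k) := by
  cases i
  · rfl
  · exact Nat.lcm_comm _ _

theorem m_ne_zero (i u : Bool) {k : ℕ} (hk : k ≤ D.e - 1) : D.m i u k ≠ 0 :=
  Nat.one_le_iff_ne_zero.1 (D.m_pos i u k hk)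

theorem b_mul_m (i : Bool) (k : ℕ) : D.b i k * D.m i (!i) k = D.dd i k :=
  Nat.div_mul_cancel (by rw [dd_eq_lcm]; exact Nat.dvd_lcm_right _ _)

theorem exists_step_factorization (i : Bool) {k : ℕ} (hk : k ≤ D.e - 1) :
    ∃ g ≠ 0, D.m i i k = D.b i k * g ∧ D.m i (!i) k = D.q i k * g ∧
      D.dd i k = D.b i k * D.q i k * g ∧ (D.b i k).Coprime (D.q i k) := by
  rw [b, q, dd_eq_lcm]
  exact Nat.exists_lcm_div_factorization (D.m_ne_zero i i hk) (D.m_ne_zero i (!i) hk)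

/-- Modulo `ℤ²`, the recursion for the derived exponents is
`λ^{(k+1)}_{•,j}(i) ≡ stepMatrix i k · λ^{(k)}_{•,j+1}(i)`. -/
def stepMatrix (i : Bool) (k : ℕ) : Matrix Bool Bool ℚ :=
  Matrix.of fun u v =>
    if u = i then (if v = i then (D.b i k : ℚ) else D.r i k * D.n i i k * D.q i k)
    else if v = i then 0 else D.m i (!i) k

theorem stepMatrix_mulVec_self (i : Bool) (k : ℕ) (y : Bool → ℚ) :
    (D.stepMatrix i k *ᵥ y) i = D.b i k * y i + D.r i k * D.n i i k * D.q i k * y (!i) := by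
  cases i <;> simp [stepMatrix, mulVec, dotProduct, add_comm]

theorem stepMatrix_mulVec_other (i : Bool) (k : ℕ) (y : Bool → ℚ) :
    (D.stepMatrix i k *ᵥ y) (!i) = D.m i (!i) k * y (!i) := by
  cases i <;> simp [stepMatrix, mulVec, dotProduct]

theorem det_stepMatrix (i : Bool) (k : ℕ) : (D.stepMatrix i k).det = D.dd i k := by
  rw [← D.b_mul_m i k]
  cases i <;> simp [det_bool, stepMatrix, mul_comm]

theorem stepMatrix_mulVec_mem_intPoints_iff (i : Bool) {k : ℕ} (hk : k ≤ D.e - 1)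
    (y : Bool → ℚ) :
    D.stepMatrix i k *ᵥ y ∈ intPoints Bool ↔ ∃ a : ℤ, y - a • D.expVec i k 1 ∈ intPoints Bool := by
  obtain ⟨g, hg, hms, hmo, -, hbq⟩ := D.exists_step_factorization i hk
  have hns : IsCoprime (D.n i i k) (D.b i k) := by
    have hcop := Int.isCoprime_iff_gcd_eq_one.2 (D.cop i i k hk)
    rw [hms, Nat.cast_mul] at hcop
    exact hcop.of_mul_right_left
  have hrs := D.rs_det i k hk
  rw [hmo, Nat.cast_mul] at hrs
  simp only [mem_intPoints, Bool.forall_bool' i, Pi.sub_apply, Pi.smul_apply,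
    stepMatrix_mulVec_self, stepMatrix_mulVec_other, expVec]
  simp only [D.lead i i k hk, D.lead i (!i) k hk, hms, hmo, zsmul_eq_mul, Nat.cast_mul]
  simpa using step_image_mem_bot_iff (left_ne_zero_of_mul (hms ▸ D.m_ne_zero i i hk))
    (left_ne_zero_of_mul (hmo ▸ D.m_ne_zero i (!i) hk)) hg hbq hns hrs (y i) (y (!i))

theorem expVec_succ_sub_mem (i : Bool) {k j : ℕ} (hk : k + 1 ≤ D.e - 1) (hj : 1 ≤ j)
    (hj' : j ≤ D.e - (k + 1)) :
    D.expVec i (k + 1) j - D.stepMatrix i k *ᵥ D.expVec i k (j + 1) ∈ intPoints Bool := by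
  have hk' : k ≤ D.e - 1 := by omega
  obtain ⟨g, hg, hms, hmo, hd, -⟩ := D.exists_step_factorization i hk'
  have hrs : (D.q i k : ℚ) * g * D.s i k - D.n i (!i) k * D.r i k = 1 := by
    have := D.rs_det i k hk'
    rw [hmo] at this
    exact_mod_cast this
  have hother : D.lam i (!i) (k + 1) j =
      D.m i (!i) k * D.lam i (!i) k (j + 1) + ((D.dd i k : ℚ) - 1) * D.n i (!i) k := by
    rw [D.rec_other i k j hk hj hj', D.lead i (!i) k hk']
    have := D.m_ne_zero i (!i) hk'
    unfold dd
    field_simp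
    ring
  rw [mem_intPoints, Bool.forall_bool' i]
  simp only [Pi.sub_apply, stepMatrix_mulVec_self, stepMatrix_mulVec_other, expVec]
  constructor
  · rw [D.rec_self i k j hk hj hj', hother, D.lead i i k hk']
    refine Subring.mem_bot.2 ⟨(D.dd i k - 1) * D.n i i k * D.q i k * D.s i k, ?_⟩
    change _ = (D.b i k : ℚ) * (_ - _ + (D.dd i k : ℚ) * _) + (D.b i k : ℚ) * _ * _ * _ - _
    rw [hd, hms, hmo]
    have := left_ne_zero_of_mul (hms ▸ D.m_ne_zero i i hk')
    push_cast
    field_simp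
    linear_combination ((D.q i k * g * D.b i k - 1) * D.n i i k : ℚ) * hrs
  · rw [hother, add_sub_cancel_left]
    exact mul_mem (sub_mem (natCast_mem _ _) (one_mem _)) (intCast_mem _ _)

def stepProd (i : Bool) : ℕ → Matrix Bool Bool ℚ
  | 0 => 1
  | k + 1 => D.stepMatrix i k * stepProd i k

/-- `ℤ² + ℤλ_1 + ⋯ + ℤλ_k`, where `λ_l = (λ_{1,l}, λ_{2,l})` is the `l`-th characteristic pair. -/
def charLattice : ℕ → AddSubgroup (Bool → ℚ)
  | 0 => intPoints Bool
  | k + 1 => charLattice k ⊔ AddSubgroup.zmultiples (D.charVec (k + 1))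

theorem det_stepProd (i : Bool) (k : ℕ) :
    (D.stepProd i k).det = ∏ l ∈ range k, (D.dd i l : ℚ) := by
  induction k with
  | zero => simp [stepProd]
  | succ k ih => rw [stepProd, det_mul, det_stepMatrix, ih, prod_range_succ, mul_comm]

theorem stepProd_mulVec_other (i : Bool) (k : ℕ) (x : Bool → ℚ) :
    (D.stepProd i k *ᵥ x) (!i) = (∏ l ∈ range k, (D.m i (!i) l : ℚ)) * x (!i) := by
  induction k with
  | zero => simp [stepProd]
  | succ k ih =>
    rw [stepProd, ← mulVec_mulVec, stepMatrix_mulVec_other, ih, prod_range_succ]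
    ring

theorem stepProd_mulVec_charVec_sub_mem (i : Bool) {k j : ℕ} (hk : k ≤ D.e - 1) (hj : 1 ≤ j)
    (hjk : k + j ≤ D.e) :
    D.stepProd i k *ᵥ D.charVec (k + j) - D.expVec i k j ∈ intPoints Bool := by
  induction k generalizing j with
  | zero =>
    have : D.charVec j = D.expVec i 0 j := by ext u; simp [charVec, expVec, D.base]
    simp [stepProd, this]
  | succ k ih =>
    have hstep := (D.stepMatrix_mulVec_mem_intPoints_iff i (k := k) (by omega) _).2
      ⟨0, by simpa using ih (j := j + 1) (by omega) (by omega) (by omega)⟩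
    have hrec := D.expVec_succ_sub_mem i hk hj (by omega)
    rw [show k + 1 + j = k + (j + 1) by omega, stepProd, ← mulVec_mulVec]
    convert sub_mem hstep hrec using 1
    rw [mulVec_sub]
    abel

theorem stepProd_mulVec_mem_intPoints_iff (i : Bool) {k : ℕ} (hk : k ≤ D.e - 1)
    (x : Bool → ℚ) : D.stepProd i k *ᵥ x ∈ intPoints Bool ↔ x ∈ D.charLattice k := by
  induction k generalizing x with
  | zero => simp [stepProd, charLattice]
  | succ k ih =>
    set P := D.stepProd i k
    have hlead := D.stepProd_mulVec_charVec_sub_mem i (k := k) (j := 1) (by omega) le_rfl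
      (by omega)
    rw [stepProd, ← mulVec_mulVec, D.stepMatrix_mulVec_mem_intPoints_iff i (by omega),
      charLattice, AddSubgroup.mem_sup_zmultiples_iff]
    refine exists_congr fun a => ?_
    rw [← ih (by omega), mulVec_sub, mulVec_smul]
    have hsplit : P *ᵥ x - a • D.expVec i k 1 =
        (P *ᵥ x - a • (P *ᵥ D.charVec (k + 1))) +
          a • (P *ᵥ D.charVec (k + 1) - D.expVec i k 1) := by
      rw [smul_sub]
      abel
    rw [hsplit, AddSubgroup.add_mem_cancel_right _ (zsmul_mem hlead a)]

theorem prod_dd_pos (i : Bool) {k : ℕ} (hk : k ≤ D.e - 1) :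
    0 < ∏ l ∈ range k, (D.dd i l : ℚ) := by
  refine prod_pos fun l hl => ?_
  have hl : l ≤ D.e - 1 := by rw [mem_range] at hl; omega
  exact_mod_cast Nat.pos_of_ne_zero
    (Nat.lcm_ne_zero (D.m_ne_zero i false hl) (D.m_ne_zero i true hl))

theorem prod_m_pos (i u : Bool) {k : ℕ} (hk : k ≤ D.e - 1) :
    0 < ∏ l ∈ range k, (D.m i u l : ℚ) := by
  refine prod_pos fun l hl => ?_
  have hl : l ≤ D.e - 1 := by rw [mem_range] at hl; omega
  exact_mod_cast D.m_pos i u l hl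

theorem prod_dd_false_eq_prod_dd_true {k : ℕ} (hk : k ≤ D.e - 1) :
    ∏ l ∈ range k, (D.dd false l : ℚ) = ∏ l ∈ range k, (D.dd true l : ℚ) := by
  have hpos : ∀ i, 0 < (D.stepProd i k).det := fun i => by
    rw [det_stepProd]
    exact D.prod_dd_pos i hk
  rw [← det_stepProd, ← det_stepProd]
  refine det_eq_of_forall_mulVec_mem_intPoints_iff (hpos false) (hpos true) fun x => ?_
  rw [D.stepProd_mulVec_mem_intPoints_iff false hk, D.stepProd_mulVec_mem_intPoints_iff true hk]

theorem prod_m_mul_prod_m_div_prod_dd_mem_bot {k : ℕ} (hk : k ≤ D.e - 1) :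
    (∏ l ∈ range k, (D.m true false l : ℚ)) * (∏ l ∈ range k, (D.m false true l : ℚ)) /
      ∏ l ∈ range k, (D.dd false l : ℚ) ∈ (⊥ : Subring ℚ) := by
  set c : Bool → ℚ := fun u => ∏ l ∈ range k, (D.m (!u) u l : ℚ)
  have hc : ∀ x, D.stepProd false k *ᵥ x ∈ intPoints Bool →
      diagonal c *ᵥ x ∈ intPoints Bool := by
    intro x hx
    rw [D.stepProd_mulVec_mem_intPoints_iff false hk] at hx
    refine mem_intPoints.2 fun u => ?_
    have hrow := D.stepProd_mulVec_other (!u) k x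
    rw [Bool.not_not] at hrow
    rw [mulVec_diagonal, ← hrow]
    exact mem_intPoints.1 ((D.stepProd_mulVec_mem_intPoints_iff (!u) hk x).2 hx) u
  have h := det_div_det_mem_bot (by rw [det_stepProd]; exact (D.prod_dd_pos false hk).ne') hc
  rwa [det_diagonal, Fintype.prod_bool, det_stepProd, mul_comm] at h

theorem m_zero_eq_den (i u : Bool) : D.m i u 0 = (D.lam0 u 1).den := by
  have h0 : 0 ≤ D.e - 1 := Nat.zero_le _
  have hm : (0 : ℤ) < D.m i u 0 := by exact_mod_cast D.m_pos i u 0 h0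
  have hcop : (D.n i u 0).natAbs.Coprime (D.m i u 0 : ℤ).natAbs := D.cop i u 0 h0
  have hlam : D.lam0 u 1 = (D.n i u 0 : ℚ) / ((D.m i u 0 : ℤ) : ℚ) := by
    rw [← D.base i u 1, D.lead i u 0 h0]
    norm_cast
  rw [hlam]
  exact_mod_cast (Rat.den_div_eq_of_coprime hm hcop).symm

theorem Umat_zero_zero :
    ∀ k, D.Umat k 0 0 = ∏ l ∈ range k, (D.b false l : ℚ) / D.m true false l
  | 0 => by simp [Umat]
  | 1 => by simp [Umat, m_zero_eq_den]
  | k + 2 => by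
    rw [prod_range_succ, ← Umat_zero_zero (k + 1)]
    simp only [Umat, of_apply, cons_val', cons_val_zero, cons_val_fin_one]
    ring

theorem Umat_one_one :
    ∀ k, D.Umat k 1 1 = ∏ l ∈ range k, (D.b true l : ℚ) / D.m false true l
  | 0 => by simp [Umat]
  | 1 => by simp [Umat, m_zero_eq_den]
  | k + 2 => by
    rw [prod_range_succ, ← Umat_one_one (k + 1)]
    simp only [Umat, of_apply, cons_val', cons_val_one, cons_val_fin_one]
    ring

theorem prod_b_div_m (i : Bool) {k : ℕ} (hk : k ≤ D.e - 1) :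
    ∏ l ∈ range k, (D.b i l : ℚ) / D.m (!i) i l =
      (∏ l ∈ range k, (D.dd i l : ℚ)) /
        ((∏ l ∈ range k, (D.m true false l : ℚ)) * ∏ l ∈ range k, (D.m false true l : ℚ)) := by
  rw [← prod_mul_distrib, ← prod_div_distrib]
  refine prod_congr rfl fun l hl => ?_
  have hl : l ≤ D.e - 1 := by rw [mem_range] at hl; omega
  have hm : (D.m i (!i) l : ℚ) ≠ 0 := by exact_mod_cast D.m_ne_zero i (!i) hl
  rw [← D.b_mul_m i l, Nat.cast_mul]
  cases i <;> simp only [Bool.not_false, Bool.not_true] at hm ⊢ <;> field_simp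

end QOData

theorem Umat_diagonal_general (D : QOData) (k : ℕ) (hk : k ≤ D.e - 1) :
    D.Umat k 0 0 = D.Umat k 1 1 ∧
    D.Umat k 1 1 =
      (∏ l ∈ Finset.range k, (D.dd false l : ℚ)) /
        ((∏ l ∈ Finset.range k, (D.m true false l : ℚ)) *
          (∏ l ∈ Finset.range k, (D.m false true l : ℚ))) ∧
    ∃ N : ℤ, 0 < N ∧ sw (D.Umat k) 1 1 = (N : ℚ) := by
  have h00 := (D.Umat_zero_zero k).trans (D.prod_b_div_m false hk)
  have h11 := (D.Umat_one_one k).trans (D.prod_b_div_m true hk)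
  rw [← D.prod_dd_false_eq_prod_dd_true hk] at h11
  refine ⟨h00.trans h11.symm, h11, ?_⟩
  obtain ⟨N, hN⟩ := Subring.mem_bot.1 (D.prod_m_mul_prod_m_div_prod_dd_mem_bot hk)
  have hNpos : (0 : ℚ) < N := by
    rw [hN]
    have := D.prod_dd_pos false hk
    have := D.prod_m_pos true false hk
    have := D.prod_m_pos false true hk
    positivity
  refine ⟨N, by exact_mod_cast hNpos, ?_⟩
  rw [hN, sw, h11]
  simp

/-- The diagonal entries of `U^{(k)}` are equal, with explicit value
`∏_{l<k} d_•^{(l)}(1) / (∏_{l<k} m₁^{(l)}(2) · ∏_{l<k} m₂^{(l)}(1))`, and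
`M^{(k)}₂₂ = 1/U^{(k)}₂₂` is a positive integer. -/
theorem Umat_diagonal (D : QOData) (he2 : 2 ≤ D.e) (k : ℕ) (hk1 : 1 ≤ k) (hk : k ≤ D.e - 1) :
    D.Umat k 0 0 = D.Umat k 1 1 ∧
    D.Umat k 1 1 =
      (∏ l ∈ Finset.range k, (D.dd false l : ℚ)) /
        ((∏ l ∈ Finset.range k, (D.m true false l : ℚ)) *
          (∏ l ∈ Finset.range k, (D.m false true l : ℚ))) ∧
    ∃ N : ℤ, 0 < N ∧ sw (D.Umat k) 1 1 = (N : ℚ) :=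
  Umat_diagonal_general D k hk
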